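/- Vanishing of the extra variational terms for strong solutions: let ρ, v, E be C² fields on a neighborhood of x ∈ ℝ² with ρ > 0, derived fields p, T, H, τ as for the compressible Navier–Stokes equations with constant μ and κ, and suppose both v(x) = 0 and the Navier–Stokes equations hold pointwise at x, i.e. ∇·(F^c − F^v)(x) = 0. Then ρ(∇·v) = 0 at x and ρH(∇·v) − Σ_{i,j} τ_{ij} ∂v_j/∂x_i − κΔT = 0 at x; consequently the two additional boundary terms −∫_{Γ_W}(V·n)ρ(∇·v)z₁ and −∫_{Γ_{adia}}(V·n)(ρH(∇·v) − Σ_{i,j}τ_{ij}∂v_j/∂x_i − κΔT)z₄ appearing in the Hadamard form of the shape gradient derived from the variational formulation vanish, so the variational-form and strong-form shape gradients coincide. -/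

import Mathlib

/-!
At a point where `v = 0` the product rule gives `∂ₖ(f vₖ) = f ∂ₖvₖ` for every differentiable
coefficient `f`, whatever its derivative. Applied to the continuity and energy components of
`∇·(F^c − F^v)`, whose convective and work terms are all of the form `f vₖ`, it turns them into
`ρ ∇·v` and `ρH ∇·v − Σ τₖⱼ ∂ₖvⱼ − κΔT`; the Navier–Stokes equations say both vanish.
-/

open MeasureTheory

noncomputable section

/-- The physical domain `ℝ²`. -/
abbrev Dom := EuclideanSpace ℝ (Fin 2)

/-- The space of conserved variables `u = (ρ, ρv₁, ρv₂, ρE) ∈ ℝ⁴`. -/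
abbrev St := Fin 4 → ℝ

/-- Standard basis vector of the domain. -/
def ee (k : Fin 2) : Dom := EuclideanSpace.single k 1

/-- Velocity `v_i = u_{i+1}/u_0` from conserved variables. -/
def vel (u : St) (i : Fin 2) : ℝ := u i.succ.castSucc / u 0

/-- Squared speed `‖v‖²`. -/
def kin (u : St) : ℝ := vel u 0 ^ 2 + vel u 1 ^ 2

/-- Total energy `E = u_3/u_0`. -/
def toten (u : St) : ℝ := u 3 / u 0

/-- Pressure `p = (R/c_v) ρ (E − ½‖v‖²)`. -/
def pres (R cv : ℝ) (u : St) : ℝ := R / cv * u 0 * (toten u - kin u / 2)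

/-- Enthalpy `H = E + p/ρ`. -/
def enth (R cv : ℝ) (u : St) : ℝ := toten u + pres R cv u / u 0

/-- Temperature `T = (E − ½‖v‖²)/c_v`. -/
def temp (cv : ℝ) (u : St) : ℝ := (toten u - kin u / 2) / cv

/-- `∂v_i/∂x_l` expressed in terms of `(u, ∇u)`, where `g l = ∂u/∂x_l`. -/
def dvel (u : St) (g : Fin 2 → St) (i l : Fin 2) : ℝ :=
  (g l i.succ.castSucc * u 0 - u i.succ.castSucc * g l 0) / u 0 ^ 2

/-- `∂E/∂x_l` expressed in terms of `(u, ∇u)`. -/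
def dtoten (u : St) (g : Fin 2 → St) (l : Fin 2) : ℝ :=
  (g l 3 * u 0 - u 3 * g l 0) / u 0 ^ 2

/-- `∂T/∂x_l` expressed in terms of `(u, ∇u)`. -/
def dtemp (cv : ℝ) (u : St) (g : Fin 2 → St) (l : Fin 2) : ℝ :=
  (dtoten u g l - (vel u 0 * dvel u g 0 l + vel u 1 * dvel u g 1 l)) / cv

/-- Viscous stress tensor `τ = μ(∇v + (∇v)ᵀ − (2/3)(∇·v)I)` in terms of `(u, ∇u)`. -/
def tauC (μ : ℝ) (u : St) (g : Fin 2 → St) (i j : Fin 2) : ℝ :=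
  μ * (dvel u g i j + dvel u g j i
    - 2 / 3 * (dvel u g 0 0 + dvel u g 1 1) * (if i = j then 1 else 0))

/-- Convective fluxes `F^c = (f₁^c, f₂^c)` as a function of the conserved variables. -/
def Fc (R cv : ℝ) (u : St) (k : Fin 2) : St :=
  ![u 0 * vel u k,
    u 0 * vel u 0 * vel u k + (if k = 0 then pres R cv u else 0),
    u 0 * vel u 1 * vel u k + (if k = 1 then pres R cv u else 0),
    u 0 * enth R cv u * vel u k]

/-- Viscous fluxes `F^v = (f₁^v, f₂^v)` as a function of `(u, ∇u)`. -/
def Fv (μ κ cv : ℝ) (u : St) (g : Fin 2 → St) (k : Fin 2) : St :=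
  ![0,
    tauC μ u g 0 k,
    tauC μ u g 1 k,
    (∑ j, tauC μ u g k j * vel u j) + κ * dtemp cv u g k]

/-- Spatial derivative `∂u/∂x_k` of a field. -/
def Du (u : Dom → St) (x : Dom) (k : Fin 2) : St := fderiv ℝ u x (ee k)

/-- Divergence `∇·Φ = Σ_k ∂Φ_k/∂x_k` of a (two-component, `St`-valued) flux field. -/
def divF (Φ : Dom → Fin 2 → St) (x : Dom) : St :=
  ∑ k, fderiv ℝ (fun y => Φ y k) x (ee k)

/-- Homogeneity tensor `G^{ij}_{kl} = ∂(f^v_k)_i/∂(∂u_j/∂x_l)`. -/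
def Ghom (μ κ cv : ℝ) (u : St) (g : Fin 2 → St) (k l : Fin 2) (i j : Fin 4) : ℝ :=
  fderiv ℝ (fun g' => Fv μ κ cv u g' k i) g (Pi.single l (Pi.single j 1))

/-! Field-based quantities: density `ρ`, velocity `v`, total energy `E` given as fields. -/

/-- Pressure field `p = (R/c_v)ρ(E − ½‖v‖²)`. -/
def presF (R cv : ℝ) (ρ : Dom → ℝ) (v : Dom → Fin 2 → ℝ) (E : Dom → ℝ) (y : Dom) : ℝ :=
  R / cv * ρ y * (E y - (v y 0 ^ 2 + v y 1 ^ 2) / 2)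

/-- Temperature field `T = (E − ½‖v‖²)/c_v`. -/
def tempF (cv : ℝ) (v : Dom → Fin 2 → ℝ) (E : Dom → ℝ) (y : Dom) : ℝ :=
  (E y - (v y 0 ^ 2 + v y 1 ^ 2) / 2) / cv

/-- Enthalpy field `H = E + p/ρ`. -/
def enthF (R cv : ℝ) (ρ : Dom → ℝ) (v : Dom → Fin 2 → ℝ) (E : Dom → ℝ) (y : Dom) : ℝ :=
  E y + presF R cv ρ v E y / ρ y

/-- Velocity gradient `∂v_i/∂x_j`. -/
def dvF (v : Dom → Fin 2 → ℝ) (y : Dom) (i j : Fin 2) : ℝ :=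
  fderiv ℝ (fun y' => v y' i) y (ee j)

/-- Viscous stress tensor field `τ = μ(∇v + (∇v)ᵀ − (2/3)(∇·v)I)`. -/
def tauF (μ : ℝ) (v : Dom → Fin 2 → ℝ) (y : Dom) (i j : Fin 2) : ℝ :=
  μ * (dvF v y i j + dvF v y j i
    - 2 / 3 * (dvF v y 0 0 + dvF v y 1 1) * (if i = j then 1 else 0))

/-- Convective flux field. -/
def FcF (R cv : ℝ) (ρ : Dom → ℝ) (v : Dom → Fin 2 → ℝ) (E : Dom → ℝ) (y : Dom)
    (k : Fin 2) : St :=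
  ![ρ y * v y k,
    ρ y * v y 0 * v y k + (if k = 0 then presF R cv ρ v E y else 0),
    ρ y * v y 1 * v y k + (if k = 1 then presF R cv ρ v E y else 0),
    ρ y * enthF R cv ρ v E y * v y k]

/-- Viscous flux field. -/
def FvF (μ κ cv : ℝ) (v : Dom → Fin 2 → ℝ) (E : Dom → ℝ) (y : Dom) (k : Fin 2) : St :=
  ![0,
    tauF μ v y 0 k,
    tauF μ v y 1 k,
    (∑ j, tauF μ v y k j * v y j) + κ * fderiv ℝ (tempF cv v E) y (ee k)]

section Calculus

variable {𝕜 F G : Type*} [NontriviallyNormedField 𝕜] [NormedAddCommGroup F] [NormedSpace 𝕜 F]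
  [NormedAddCommGroup G] [NormedSpace 𝕜 G] {x : F}

theorem HasFDerivAt.mul_of_right_eq_zero {f g : F → 𝕜} {f' g' : F →L[𝕜] 𝕜}
    (hf : HasFDerivAt f f' x) (hg : HasFDerivAt g g' x) (hg0 : g x = 0) :
    HasFDerivAt (fun y => f y * g y) (f x • g') x := by
  have h := hf.fun_smul hg
  simp only [hg0, ContinuousLinearMap.smulRight_zero, add_zero] at h
  exact h

theorem ContDiffAt.differentiableAt_fderiv_apply {f : F → G} (hf : ContDiffAt 𝕜 2 f x) (w : F) :
    DifferentiableAt 𝕜 (fun y => fderiv 𝕜 f y w) x :=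
  ((hf.fderiv_right (m := 1) le_rfl).differentiableAt one_ne_zero).clm_apply
    (differentiableAt_const w)

end Calculus

def netFlux (R cv μ κ : ℝ) (ρ : Dom → ℝ) (v : Dom → Fin 2 → ℝ) (E : Dom → ℝ) (y : Dom)
    (k : Fin 2) : St :=
  FcF R cv ρ v E y k - FvF μ κ cv v E y k

theorem divF_apply {Φ : Dom → Fin 2 → St} {x : Dom}
    (hΦ : ∀ k, DifferentiableAt ℝ (fun y => Φ y k) x) (i : Fin 4) :
    divF Φ x i = ∑ k, fderiv ℝ (fun y => Φ y k i) x (ee k) := by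
  simp [divF, fderiv_apply (hΦ _) i]

section Fields

variable {R cv μ κ : ℝ} {ρ : Dom → ℝ} {v : Dom → Fin 2 → ℝ} {E : Dom → ℝ} {x : Dom}

-- Also where `ρ y = 0`: then `p / ρ = 0`, but `p = 0` too since `presF` carries the factor `ρ y`.
theorem mul_enthF (y : Dom) : ρ y * enthF R cv ρ v E y = ρ y * E y + presF R cv ρ v E y := by
  rcases eq_or_ne (ρ y) 0 with h | h
  · simp [enthF, presF, h]
  · rw [enthF, mul_add, mul_div_cancel₀ _ h]

theorem netFlux_apply_zero (y : Dom) (k : Fin 2) :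
    netFlux R cv μ κ ρ v E y k 0 = ρ y * v y k := by
  simp [netFlux, FcF, FvF]

theorem netFlux_apply_three (y : Dom) (k : Fin 2) :
    netFlux R cv μ κ ρ v E y k 3 = ρ y * enthF R cv ρ v E y * v y k
      - ((∑ j, tauF μ v y k j * v y j) + κ * fderiv ℝ (tempF cv v E) y (ee k)) := by
  simp [netFlux, FcF, FvF]

theorem differentiableAt_dvF {i : Fin 2} (hv : ContDiffAt ℝ 2 (fun y => v y i) x) (j : Fin 2) :
    DifferentiableAt ℝ (fun y => dvF v y i j) x :=
  hv.differentiableAt_fderiv_apply (ee j)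

theorem differentiableAt_tauF (hv : ∀ i, ContDiffAt ℝ 2 (fun y => v y i) x) (i j : Fin 2) :
    DifferentiableAt ℝ (fun y => tauF μ v y i j) x := by
  have hdv := fun i => differentiableAt_dvF (hv i)
  unfold tauF
  fun_prop

theorem contDiffAt_tempF (hv : ∀ i, ContDiffAt ℝ 2 (fun y => v y i) x)
    (hE : ContDiffAt ℝ 2 E x) : ContDiffAt ℝ 2 (tempF cv v E) x := by
  unfold tempF
  fun_prop

theorem differentiableAt_presF (hρ : DifferentiableAt ℝ ρ x)
    (hv : ∀ i, DifferentiableAt ℝ (fun y => v y i) x) (hE : DifferentiableAt ℝ E x) :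
    DifferentiableAt ℝ (presF R cv ρ v E) x := by
  unfold presF
  fun_prop

theorem differentiableAt_mul_enthF (hρ : DifferentiableAt ℝ ρ x)
    (hv : ∀ i, DifferentiableAt ℝ (fun y => v y i) x) (hE : DifferentiableAt ℝ E x) :
    DifferentiableAt ℝ (fun y => ρ y * enthF R cv ρ v E y) x := by
  simp_rw [mul_enthF]
  exact (hρ.mul hE).add (differentiableAt_presF hρ hv hE)

theorem differentiableAt_netFlux (hρ : DifferentiableAt ℝ ρ x)
    (hv : ∀ i, ContDiffAt ℝ 2 (fun y => v y i) x) (hE : ContDiffAt ℝ 2 E x) (k : Fin 2) :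
    DifferentiableAt ℝ (fun y => netFlux R cv μ κ ρ v E y k) x := by
  have hv₁ := fun i => (hv i).differentiableAt two_ne_zero
  have hp := differentiableAt_presF (R := R) (cv := cv) hρ hv₁ (hE.differentiableAt two_ne_zero)
  have hτ := differentiableAt_tauF (μ := μ) hv
  have hρH :=
    differentiableAt_mul_enthF (R := R) (cv := cv) hρ hv₁ (hE.differentiableAt two_ne_zero)
  have hT := (contDiffAt_tempF (cv := cv) hv hE).differentiableAt_fderiv_apply
  rw [differentiableAt_pi]
  intro i
  fin_cases i <;> fin_cases k <;>
    simp only [netFlux, FcF, FvF, Pi.sub_apply, Fin.zero_eta, Fin.mk_one, Fin.isValue,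
      Fin.reduceFinMk, Matrix.cons_val, Matrix.cons_val_zero, Matrix.cons_val_one, ↓reduceIte,
      zero_ne_one, one_ne_zero, add_zero, sub_zero, Fin.sum_univ_two] <;>
    fun_prop

theorem fderiv_netFlux_apply_zero (hρ : DifferentiableAt ℝ ρ x)
    (hv : ∀ i, DifferentiableAt ℝ (fun y => v y i) x) (hv0 : ∀ i, v x i = 0) (k : Fin 2) :
    fderiv ℝ (fun y => netFlux R cv μ κ ρ v E y k 0) x (ee k) = ρ x * dvF v x k k := by
  simp_rw [netFlux_apply_zero]
  rw [(hρ.hasFDerivAt.mul_of_right_eq_zero (hv k).hasFDerivAt (hv0 k)).fderiv]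
  rfl

theorem fderiv_netFlux_apply_three (hρ : DifferentiableAt ℝ ρ x)
    (hv : ∀ i, ContDiffAt ℝ 2 (fun y => v y i) x) (hE : ContDiffAt ℝ 2 E x)
    (hv0 : ∀ i, v x i = 0) (k : Fin 2) :
    fderiv ℝ (fun y => netFlux R cv μ κ ρ v E y k 3) x (ee k)
      = ρ x * enthF R cv ρ v E x * dvF v x k k
        - ((∑ j, tauF μ v x k j * dvF v x j k)
          + κ * fderiv ℝ (fun y => fderiv ℝ (tempF cv v E) y (ee k)) x (ee k)) := by
  have hv₁ := fun i => ((hv i).differentiableAt two_ne_zero).hasFDerivAt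
  have hρH := (differentiableAt_mul_enthF (R := R) (cv := cv) hρ
    (fun i => (hv i).differentiableAt two_ne_zero) (hE.differentiableAt two_ne_zero)).hasFDerivAt
  have hτ := fun j => (differentiableAt_tauF (μ := μ) hv k j).hasFDerivAt
  have hT := ((contDiffAt_tempF (cv := cv) hv hE).differentiableAt_fderiv_apply (ee k)).hasFDerivAt
  have hflux : HasFDerivAt (fun y => netFlux R cv μ κ ρ v E y k 3)
      ((ρ x * enthF R cv ρ v E x) • fderiv ℝ (fun y => v y k) x
        - ((∑ j, tauF μ v x k j • fderiv ℝ (fun y => v y j) x)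
          + κ • fderiv ℝ (fun y => fderiv ℝ (tempF cv v E) y (ee k)) x)) x := by
    simp_rw [netFlux_apply_three]
    exact (hρH.mul_of_right_eq_zero (hv₁ k) (hv0 k)).sub
      ((HasFDerivAt.fun_sum (u := Finset.univ) fun j _ =>
        (hτ j).mul_of_right_eq_zero (hv₁ j) (hv0 j)).add (hT.const_mul κ))
  rw [hflux.fderiv]
  simp [dvF]

theorem divF_netFlux_apply_zero (hρ : DifferentiableAt ℝ ρ x)
    (hv : ∀ i, ContDiffAt ℝ 2 (fun y => v y i) x) (hE : ContDiffAt ℝ 2 E x)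
    (hv0 : ∀ i, v x i = 0) :
    divF (netFlux R cv μ κ ρ v E) x 0 = ρ x * (dvF v x 0 0 + dvF v x 1 1) := by
  simp only [divF_apply (differentiableAt_netFlux hρ hv hE), Fin.sum_univ_two,
    fderiv_netFlux_apply_zero hρ (fun i => (hv i).differentiableAt two_ne_zero) hv0]
  ring

theorem divF_netFlux_apply_three (hρ : DifferentiableAt ℝ ρ x)
    (hv : ∀ i, ContDiffAt ℝ 2 (fun y => v y i) x) (hE : ContDiffAt ℝ 2 E x)
    (hv0 : ∀ i, v x i = 0) :
    divF (netFlux R cv μ κ ρ v E) x 3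
      = ρ x * enthF R cv ρ v E x * (dvF v x 0 0 + dvF v x 1 1)
        - (∑ i : Fin 2, ∑ j : Fin 2, tauF μ v x i j * dvF v x j i)
        - κ * (∑ k, fderiv ℝ (fun y => fderiv ℝ (tempF cv v E) y (ee k)) x (ee k)) := by
  simp only [divF_apply (differentiableAt_netFlux hρ hv hE),
    fderiv_netFlux_apply_three hρ hv hE hv0, Fin.sum_univ_two]
  ring

end Fields

theorem stmt_14_general (R cv μ κ : ℝ)
    (U : Set Dom) (hU : IsOpen U) (x : Dom) (hx : x ∈ U)
    (ρ : Dom → ℝ) (v : Dom → Fin 2 → ℝ) (E : Dom → ℝ)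
    (hρ : ContDiffOn ℝ 2 ρ U)
    (hv : ContDiffOn ℝ 2 (fun y => (v y 0, v y 1)) U)
    (hE : ContDiffOn ℝ 2 E U)
    (hns : v x 0 = 0 ∧ v x 1 = 0)
    (hNS : divF (fun y k => FcF R cv ρ v E y k - FvF μ κ cv v E y k) x = 0) :
    ρ x * (dvF v x 0 0 + dvF v x 1 1) = 0
    ∧ ρ x * enthF R cv ρ v E x * (dvF v x 0 0 + dvF v x 1 1)
        - (∑ i : Fin 2, ∑ j : Fin 2, tauF μ v x i j * dvF v x j i)
        - κ * (∑ k, fderiv ℝ (fun y => fderiv ℝ (tempF cv v E) y (ee k)) x (ee k)) = 0 := by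
  have hxU := hU.mem_nhds hx
  have hρx : DifferentiableAt ℝ ρ x := (hρ.contDiffAt hxU).differentiableAt two_ne_zero
  have hvx : ∀ i, ContDiffAt ℝ 2 (fun y => v y i) x :=
    Fin.forall_fin_two.2 ⟨(hv.contDiffAt hxU).fst, (hv.contDiffAt hxU).snd⟩
  have hEx := hE.contDiffAt hxU
  have hv0 : ∀ i, v x i = 0 := Fin.forall_fin_two.2 hns
  constructor
  · rw [← divF_netFlux_apply_zero hρx hvx hEx hv0]
    exact congrFun hNS 0
  · rw [← divF_netFlux_apply_three hρx hvx hEx hv0]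
    exact congrFun hNS 3

/-- vanishing of the extra variational terms for strong solutions.
For `C²` fields `ρ, v, E` near `x ∈ ℝ²` with `ρ > 0`, if both the no-slip condition
`v(x) = 0` and the pointwise Navier–Stokes equations `∇·(F^c − F^v)(x) = 0` hold at `x`,
then `ρ(∇·v) = 0` and `ρH(∇·v) − Σ_{i,j}τ_{ij}∂v_j/∂x_i − κΔT = 0` at `x`; hence the two
additional boundary integrands of the variational-form shape gradient vanish and the
variational-form and strong-form shape gradients coincide. -/
theorem stmt_14 (R cv μ κ : ℝ) (hR : 0 < R) (hcv : 0 < cv) (hμ : 0 < μ) (hκ : 0 < κ)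
    (U : Set Dom) (hU : IsOpen U) (x : Dom) (hx : x ∈ U)
    (ρ : Dom → ℝ) (v : Dom → Fin 2 → ℝ) (E : Dom → ℝ)
    (hρ : ContDiffOn ℝ 2 ρ U)
    (hv : ContDiffOn ℝ 2 (fun y => (v y 0, v y 1)) U)
    (hE : ContDiffOn ℝ 2 E U)
    (hρpos : ∀ y ∈ U, 0 < ρ y)
    (hns : v x 0 = 0 ∧ v x 1 = 0)
    (hNS : divF (fun y k => FcF R cv ρ v E y k - FvF μ κ cv v E y k) x = 0) :
    ρ x * (dvF v x 0 0 + dvF v x 1 1) = 0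
    ∧ ρ x * enthF R cv ρ v E x * (dvF v x 0 0 + dvF v x 1 1)
        - (∑ i : Fin 2, ∑ j : Fin 2, tauF μ v x i j * dvF v x j i)
        - κ * (∑ k, fderiv ℝ (fun y => fderiv ℝ (tempF cv v E) y (ee k)) x (ee k)) = 0 :=
  stmt_14_general R cv μ κ U hU x hx ρ v E hρ hv hE hns hNS

end
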